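/- Let K ≥ 2 be an integer, let ν ≥ 0, and let λ ∈ ℝ^K with λ_k ≥ 0 for every k. Then inf{ Σ_{k=1}^K λ_k·γ_k^{−ν} : γ ∈ relint(Δ^K) } = ( Σ_{k=1}^K λ_k^{1/(ν+1)} )^{ν+1}. -/

import Mathlib

/-!
Write `lam k = a k ^ (ν + 1)` and `S = ∑ a k`. For `γ` in the simplex,
`∑ a k ^ (ν + 1) γ k ^ (-ν) = ∑ γ k (a k / γ k) ^ (ν + 1) ≥ (∑ a k) ^ (ν + 1)` by Jensen's
inequality for the convex power `x ^ (ν + 1)`, with equality at `γ = a / S`. That point may lie on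
the boundary of the simplex, but the interior points `(a + t) / (S + K t)` give values at most
`S (S + K t) ^ ν`, which tend to `S ^ (ν + 1)` as `t → 0⁺`.
-/

open Finset Real

/-- The α-Tsallis entropy on the positive orthant (Shannon for α = 1, Burg for α = 0). -/
noncomputable def tsallis (α : ℝ) {K : ℕ} (p : Fin K → ℝ) : ℝ :=
  if α = 0 then ∑ k, Real.log (p k)
  else if α = 1 then -∑ k, p k * Real.log (p k)
  else (∑ k, p k ^ α) / (α * (1 - α))

/-- The gradient of the α-Tsallis entropy on the positive orthant. -/
noncomputable def tsallisGrad (α : ℝ) {K : ℕ} (q : Fin K → ℝ) (k : Fin K) : ℝ :=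
  if α = 0 then 1 / q k
  else if α = 1 then -(1 + Real.log (q k))
  else -(q k ^ (α - 1)) / (α - 1)

/-- The Bregman divergence D_α of the negative α-Tsallis entropy:
`D_α(p‖q) = -S_α(p) + S_α(q) + ⟨∇S_α(q), p - q⟩`. -/
noncomputable def breg (α : ℝ) {K : ℕ} (p q : Fin K → ℝ) : ℝ :=
  -tsallis α p + tsallis α q + ∑ k, tsallisGrad α q k * (p k - q k)

/-- The relative interior of the probability simplex Δ^K. -/
def relintSimplex (K : ℕ) : Set (Fin K → ℝ) :=
  {p | (∀ k, 0 < p k ∧ p k < 1) ∧ ∑ k, p k = 1}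

/-- The ℓ¹ norm on ℝ^K. -/
noncomputable def l1 {K : ℕ} (x : Fin K → ℝ) : ℝ := ∑ k, |x k|

open Filter Topology

lemma mul_div_rpow_add_one {a γ ν : ℝ} (ha : 0 ≤ a) (hγ : 0 < γ) (hν : ν + 1 ≠ 0) :
    γ * (a / γ) ^ (ν + 1) = a ^ (ν + 1) * γ ^ (-ν) := by
  rw [Real.div_rpow ha hγ.le, Real.rpow_add_one' hγ.le hν, Real.rpow_neg hγ.le]
  have : 0 < γ ^ ν := Real.rpow_pos_of_pos hγ ν
  field_simp

lemma rpow_sum_le_sum_rpow_mul_rpow_neg {ι : Type*} (s : Finset ι) {ν : ℝ} (hν : 0 ≤ ν)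
    {a γ : ι → ℝ} (ha : ∀ i ∈ s, 0 ≤ a i) (hγ : ∀ i ∈ s, 0 < γ i) (hγ_sum : ∑ i ∈ s, γ i = 1) :
    (∑ i ∈ s, a i) ^ (ν + 1) ≤ ∑ i ∈ s, a i ^ (ν + 1) * γ i ^ (-ν) := by
  have jensen := Real.rpow_arith_mean_le_arith_mean_rpow s γ (fun i => a i / γ i)
    (fun i hi => (hγ i hi).le) hγ_sum (fun i hi => div_nonneg (ha i hi) (hγ i hi).le)
    (by linarith : 1 ≤ ν + 1)
  calc (∑ i ∈ s, a i) ^ (ν + 1) = (∑ i ∈ s, γ i * (a i / γ i)) ^ (ν + 1) := by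
        congr 1
        exact Finset.sum_congr rfl fun i hi => (mul_div_cancel₀ _ (hγ i hi).ne').symm
    _ ≤ ∑ i ∈ s, γ i * (a i / γ i) ^ (ν + 1) := jensen
    _ = ∑ i ∈ s, a i ^ (ν + 1) * γ i ^ (-ν) :=
        Finset.sum_congr rfl fun i hi => mul_div_rpow_add_one (ha i hi) (hγ i hi) (by linarith)

lemma rpow_add_one_mul_rpow_neg_le {a γ D ν : ℝ} (ha : 0 ≤ a) (hγ : 0 < γ) (hν : 0 ≤ ν)
    (h : a ≤ γ * D) : a ^ (ν + 1) * γ ^ (-ν) ≤ a * D ^ ν := by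
  rw [← mul_div_rpow_add_one ha hγ (by linarith), Real.rpow_add_one' (div_nonneg ha hγ.le)
    (by linarith), mul_left_comm, mul_div_cancel₀ _ hγ.ne', mul_comm]
  exact mul_le_mul_of_nonneg_left
    (Real.rpow_le_rpow (div_nonneg ha hγ.le) ((div_le_iff₀' hγ).2 h) hν) ha

lemma mem_relintSimplex_add_div {K : ℕ} (hK : 1 < K) {s : Fin K → ℝ} (hs : ∀ k, 0 ≤ s k)
    {t : ℝ} (ht : 0 < t) : (fun k => (s k + t) / (∑ j, s j + K * t)) ∈ relintSimplex K := by
  have hK' : (1 : ℝ) < K := by exact_mod_cast hK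
  have hsum : 0 ≤ ∑ j, s j := Finset.sum_nonneg fun j _ => hs j
  have hden : 0 < ∑ j, s j + K * t := by positivity
  refine ⟨fun k => ⟨div_pos (by linarith [hs k]) hden, ?_⟩, ?_⟩
  · have hk : s k ≤ ∑ j, s j := Finset.single_le_sum (fun j _ => hs j) (Finset.mem_univ k)
    rw [div_lt_one hden]
    nlinarith
  · rw [← Finset.sum_div, Finset.sum_add_distrib, Finset.sum_const, Finset.card_univ,
      Fintype.card_fin, nsmul_eq_mul, div_self hden.ne']

theorem sInf_sum_rpow_mul_rpow_neg {K : ℕ} (hK : 1 < K) {ν : ℝ} (hν : 0 ≤ ν) {a : Fin K → ℝ}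
    (ha : ∀ k, 0 ≤ a k) :
    sInf {r : ℝ | ∃ γ ∈ relintSimplex K, r = ∑ k, a k ^ (ν + 1) * γ k ^ (-ν)} =
      (∑ k, a k) ^ (ν + 1) := by
  set S := ∑ k, a k
  have hS : 0 ≤ S := Finset.sum_nonneg fun k _ => ha k
  have lower : ∀ γ ∈ relintSimplex K, S ^ (ν + 1) ≤ ∑ k, a k ^ (ν + 1) * γ k ^ (-ν) :=
    fun γ hγ => rpow_sum_le_sum_rpow_mul_rpow_neg _ hν (fun k _ => ha k)
      (fun k _ => (hγ.1 k).1) hγ.2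
  have bdd : BddBelow {r : ℝ | ∃ γ ∈ relintSimplex K, r = ∑ k, a k ^ (ν + 1) * γ k ^ (-ν)} :=
    ⟨S ^ (ν + 1), by rintro r ⟨γ, hγ, rfl⟩; exact lower γ hγ⟩
  have upper : ∀ t > 0, sInf {r : ℝ | ∃ γ ∈ relintSimplex K,
      r = ∑ k, a k ^ (ν + 1) * γ k ^ (-ν)} ≤ S * (S + K * t) ^ ν := by
    intro t ht
    have hden : 0 < S + K * t := by positivity
    refine (csInf_le bdd ⟨_, mem_relintSimplex_add_div hK ha ht, rfl⟩).trans ?_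
    refine (Finset.sum_le_sum fun k _ => rpow_add_one_mul_rpow_neg_le (ha k)
      (div_pos (by linarith [ha k]) hden) hν ?_).trans (Finset.sum_mul ..).ge
    rw [div_mul_cancel₀ _ hden.ne']
    linarith
  refine le_antisymm ?_ (le_csInf ⟨_, _, mem_relintSimplex_add_div hK ha one_pos, rfl⟩ ?_)
  · have lim : Tendsto (fun t : ℝ => S * (S + K * t) ^ ν) (𝓝[>] 0) (𝓝 (S ^ (ν + 1))) := by
      have hcont : Continuous fun t : ℝ => S * (S + K * t) ^ ν :=
        (continuous_const.add (continuous_const.mul continuous_id)).rpow_const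
          (fun _ => Or.inr hν) |>.const_mul S
      have := (hcont.tendsto 0).mono_left (nhdsWithin_le_nhds (s := Set.Ioi 0))
      rwa [mul_zero, add_zero, ← Real.rpow_one_add' hS (by linarith), add_comm] at this
    exact ge_of_tendsto lim (eventually_nhdsWithin_of_forall upper)
  · rintro r ⟨γ, hγ, rfl⟩
    exact lower γ hγ

theorem inf_over_relint_simplex (K : ℕ) (hK : 2 ≤ K) (ν : ℝ) (hν : 0 ≤ ν)
    (lam : Fin K → ℝ) (hlam : ∀ k, 0 ≤ lam k) :
    sInf {r : ℝ | ∃ γ ∈ relintSimplex K, r = ∑ k, lam k * (γ k) ^ (-ν)} =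
      (∑ k, (lam k) ^ (1 / (ν + 1))) ^ (ν + 1) := by
  have hroot : ∀ k, (lam k ^ (1 / (ν + 1))) ^ (ν + 1) = lam k := fun k => by
    rw [← Real.rpow_mul (hlam k), one_div_mul_cancel (by linarith), Real.rpow_one]
  simpa only [hroot] using
    sInf_sum_rpow_mul_rpow_neg hK hν (a := fun k => lam k ^ (1 / (ν + 1)))
      (fun k => Real.rpow_nonneg (hlam k) _)
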